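/- For n = 3 players, there exists a cake instance where every envy-free complete connected division has egalitarian welfare at most 1/3 + ε, while some envy-free partial connected division has egalitarian welfare 1/2 - ε; hence the egalitarian dumping paradox for 3 players can be made arbitrarily close to 3/2. -/

import Mathlib

open MeasureTheory Set
open scoped ENNReal

/-- A connected division of the cake `[0,1]` among `n` players: each player gets an
open interval, the intervals are pairwise disjoint and contained in `[0,1]`. -/
structure ConnDiv (n : ℕ) where
  pieces : Fin n → Set ℝ
  isInterval : ∀ i, ∃ a b : ℝ, pieces i = Set.Ioo a b
  subset : ∀ i, pieces i ⊆ Set.Icc (0:ℝ) 1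
  disj : Pairwise fun i j => Disjoint (pieces i) (pieces j)

/-- A connected division is complete if the closures of the pieces cover `[0,1]`. -/
def ConnDiv.Complete {n : ℕ} (d : ConnDiv n) : Prop :=
  Set.Icc (0:ℝ) 1 ⊆ ⋃ i, closure (d.pieces i)

/-- Envy-freeness: every player weakly prefers her own piece. -/
def EnvyFree {n : ℕ} (v : Fin n → Measure ℝ) (d : ConnDiv n) : Prop :=
  ∀ i j, v i (d.pieces j) ≤ v i (d.pieces i)

/-- Utilitarian welfare: sum of own-piece values. -/
noncomputable def util {n : ℕ} (v : Fin n → Measure ℝ) (d : ConnDiv n) : ℝ≥0∞ :=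
  ∑ i, v i (d.pieces i)

/-- Egalitarian welfare: minimum own-piece value. -/
noncomputable def egal {n : ℕ} (v : Fin n → Measure ℝ) (d : ConnDiv n) : ℝ≥0∞ :=
  ⨅ i, v i (d.pieces i)

/-- The uniform measure of total mass `m` on the interval `(a,b)`. -/
noncomputable def unifOn (a b m : ℝ) : Measure ℝ :=
  ENNReal.ofReal (m / (b - a)) • volume.restrict (Set.Ioo a b)

/-- Player 1's measure: value `1/2 - ε` uniformly on `(0,ε)`, value `3ε`
uniformly on `(2/3, 2/3+3ε)`, value `1/2 - 2ε` uniformly on `(1-ε, 1)`. -/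
noncomputable def w1 (ε : ℝ) : Measure ℝ :=
  unifOn 0 ε (1/2 - ε) + unifOn (2/3) (2/3 + 3*ε) (3*ε) + unifOn (1-ε) 1 (1/2 - 2*ε)

/-- The uniform (Lebesgue) measure on `[0,1]`. -/
noncomputable def wU : Measure ℝ := volume.restrict (Set.Icc (0:ℝ) 1)

noncomputable def vEg3 (ε : ℝ) : Fin 3 → Measure ℝ := ![w1 ε, wU, wU]

/-!
If a complete envy-free division gave everybody more than `1/3 + ε`, the two uniform players
would hold intervals longer than `1/3 + ε`. If player 1's interval lies left of the rightmost
of them, that one reaches `1` and starts before `2/3`, so it contains player 1's mass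
`1/2 + ε` on `(2/3, 1)`, whereas player 1's own interval ends before `2/3` and is worth at most
`1/2 - ε`. Otherwise player 1's interval starts beyond `2/3 + 2ε` and is worth less than
`1/2 - ε`, while the leftmost uniform interval reaches `0` and contains `(0, ε)`. Either way
player 1 is envious. Discarding `(1 - ε, 1)` destroys this: the cuts `ε` and `1/2` give
everybody `1/2 - ε`.
-/

theorem le_or_le_of_disjoint_Ioo {α : Type*} [LinearOrder α] [DenselyOrdered α] {a b a' b' : α}
    (h : a < b) (h' : a' < b') (hd : Disjoint (Ioo a b) (Ioo a' b')) : b ≤ a' ∨ b' ≤ a := by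
  rw [Ioo_disjoint_Ioo, min_le_iff, le_max_iff, le_max_iff] at hd
  by_contra! hc
  rcases hd with (h1 | h1) | (h1 | h1) <;> order

namespace ConnDiv

variable {n : ℕ} {d : ConnDiv n} {a b : Fin n → ℝ}

theorem nonneg_and_le_one (hab : ∀ i, d.pieces i = Ioo (a i) (b i)) {i : Fin n}
    (h : a i < b i) : 0 ≤ a i ∧ b i ≤ 1 := by
  rw [← Icc_subset_Icc_iff h.le, ← closure_Ioo h.ne, ← hab]
  exact closure_minimal (d.subset i) isClosed_Icc

theorem le_or_le (hab : ∀ i, d.pieces i = Ioo (a i) (b i)) {i j : Fin n}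
    (hi : a i < b i) (hj : a j < b j) (hij : i ≠ j) : b i ≤ a j ∨ b j ≤ a i :=
  le_or_le_of_disjoint_Ioo hi hj (hab i ▸ hab j ▸ d.disj hij)

theorem Complete.exists_mem_Icc (hc : d.Complete) (hab : ∀ i, d.pieces i = Ioo (a i) (b i))
    {x : ℝ} (hx : x ∈ Icc 0 1) : ∃ i, x ∈ Icc (a i) (b i) := by
  obtain ⟨i, hi⟩ := mem_iUnion.1 (hc hx)
  exact ⟨i, closure_minimal Ioo_subset_Icc_self isClosed_Icc (hab i ▸ hi)⟩

theorem not_complete_of_lt_one (hab : ∀ i, d.pieces i = Ioo (a i) (b i)) (h : ∀ i, b i < 1) :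
    ¬ d.Complete := fun hc =>
  let ⟨i, hi⟩ := hc.exists_mem_Icc hab (right_mem_Icc.2 zero_le_one)
  (h i).not_ge hi.2

def ofIoo (a b : Fin n → ℝ) (h0 : ∀ i, 0 ≤ a i) (h1 : ∀ i, b i ≤ 1)
    (hlt : ∀ i j, i < j → b i ≤ a j) : ConnDiv n where
  pieces i := Ioo (a i) (b i)
  isInterval i := ⟨a i, b i, rfl⟩
  subset i := Ioo_subset_Icc_self.trans (Icc_subset_Icc (h0 i) (h1 i))
  disj i j hij := by
    rcases hij.lt_or_gt with h | h
    · exact Ioo_disjoint_Ioo.2 (min_le_of_left_le (le_max_of_le_right (hlt i j h)))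
    · exact Ioo_disjoint_Ioo.2 (min_le_of_right_le (le_max_of_le_left (hlt j i h)))

end ConnDiv

section Measures

variable {a b m : ℝ}

theorem unifOn_apply (S : Set ℝ) :
    unifOn a b m S = ENNReal.ofReal (m / (b - a)) * volume (S ∩ Ioo a b) := by
  rw [unifOn, Measure.smul_apply, Measure.restrict_apply' measurableSet_Ioo, smul_eq_mul]

theorem unifOn_Ioo_of_le_left {c d : ℝ} (h : d ≤ a) : unifOn a b m (Ioo c d) = 0 := by
  rw [unifOn_apply, (Ioo_disjoint_Ioo.2 (min_le_of_left_le (le_max_of_le_right h))).inter_eq,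
    measure_empty, mul_zero]

theorem unifOn_Ioo_of_right_le {c d : ℝ} (h : b ≤ c) : unifOn a b m (Ioo c d) = 0 := by
  rw [unifOn_apply, (Ioo_disjoint_Ioo.2 (min_le_of_right_le (le_max_of_le_left h))).inter_eq,
    measure_empty, mul_zero]

theorem unifOn_of_subset (hab : a < b) (hm : 0 ≤ m) {S : Set ℝ} (h : Ioo a b ⊆ S) :
    unifOn a b m S = ENNReal.ofReal m := by
  rw [unifOn_apply, inter_eq_self_of_subset_right h, Real.volume_Ioo,
    ← ENNReal.ofReal_mul (div_nonneg hm (sub_pos.2 hab).le),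
    div_mul_cancel₀ _ (sub_pos.2 hab).ne']

theorem unifOn_le (hab : a < b) (hm : 0 ≤ m) (S : Set ℝ) :
    unifOn a b m S ≤ ENNReal.ofReal m :=
  calc unifOn a b m S = unifOn a b m (S ∩ Ioo a b) := by
        rw [unifOn_apply, unifOn_apply, inter_assoc, inter_self]
    _ ≤ unifOn a b m (Ioo a b) := measure_mono inter_subset_right
    _ = ENNReal.ofReal m := unifOn_of_subset hab hm subset_rfl

theorem unifOn_Ioo_le (c d : ℝ) :
    unifOn a b m (Ioo c d) ≤ ENNReal.ofReal (m / (b - a)) * ENNReal.ofReal (b - c) := by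
  rw [unifOn_apply, ← Real.volume_Ioo]
  gcongr
  exact fun x hx => ⟨hx.1.1, hx.2.2⟩

theorem wU_Ioo_le (a b : ℝ) : wU (Ioo a b) ≤ ENNReal.ofReal (b - a) :=
  Real.volume_Ioo ▸ Measure.restrict_apply_le _ _

theorem wU_Ioo (ha : 0 ≤ a) (hb : b ≤ 1) : wU (Ioo a b) = ENNReal.ofReal (b - a) := by
  rw [wU, Measure.restrict_apply' measurableSet_Icc,
    inter_eq_self_of_subset_left (Ioo_subset_Icc_self.trans (Icc_subset_Icc ha hb)),
    Real.volume_Ioo]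

end Measures

section PlayerOne

variable {ε a b : ℝ}

theorem w1_apply (S : Set ℝ) :
    w1 ε S = unifOn 0 ε (1/2 - ε) S + unifOn (2/3) (2/3 + 3*ε) (3*ε) S
      + unifOn (1-ε) 1 (1/2 - 2*ε) S := by
  simp only [w1, Measure.coe_add, Pi.add_apply]

theorem w1_Ioo_le_of_le_two_thirds (hε : 0 < ε) (hε' : ε < 1/20) (hb : b ≤ 2/3) :
    w1 ε (Ioo a b) ≤ ENNReal.ofReal (1/2 - ε) := by
  rw [w1_apply, unifOn_Ioo_of_le_left (a := 2/3) hb,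
    unifOn_Ioo_of_le_left (a := 1 - ε) (by linarith), add_zero, add_zero]
  exact unifOn_le hε (by linarith) _

theorem w1_Ioo_le_of_subset (hε : 0 < ε) (ha : ε ≤ a) (hb : b ≤ 1 - ε) :
    w1 ε (Ioo a b) ≤ ENNReal.ofReal (3 * ε) := by
  rw [w1_apply, unifOn_Ioo_of_right_le ha, unifOn_Ioo_of_le_left hb, zero_add, add_zero]
  exact unifOn_le (by linarith) (by linarith) _

theorem ofReal_le_w1_Ioo_of_le_zero (hε : 0 < ε) (hε' : ε < 1/20) (ha : a ≤ 0)
    (hb : ε ≤ b) :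
    ENNReal.ofReal (1/2 - ε) ≤ w1 ε (Ioo a b) := by
  rw [w1_apply, unifOn_of_subset hε (by linarith) (Ioo_subset_Ioo ha hb), add_assoc]
  exact le_self_add

theorem ofReal_le_w1_Ioo_of_one_le (hε : 0 < ε) (hε' : ε < 1/20) (ha : a ≤ 2/3)
    (hb : 1 ≤ b) :
    ENNReal.ofReal (1/2 + ε) ≤ w1 ε (Ioo a b) := by
  rw [w1_apply, unifOn_of_subset (by linarith) (by linarith) (Ioo_subset_Ioo ha (by linarith)),
    unifOn_of_subset (by linarith) (by linarith) (Ioo_subset_Ioo (by linarith) hb), add_assoc,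
    ← ENNReal.ofReal_add (by linarith) (by linarith)]
  calc ENNReal.ofReal (1/2 + ε) = ENNReal.ofReal (3*ε + (1/2 - 2*ε)) := by ring_nf
    _ ≤ _ := le_add_self

theorem w1_Ioo_lt_of_lt (hε : 0 < ε) (hε' : ε < 1/20) (ha : 2/3 + 2*ε < a) :
    w1 ε (Ioo a b) < ENNReal.ofReal (1/2 - ε) := by
  calc w1 ε (Ioo a b)
      ≤ ENNReal.ofReal (2/3 + 3*ε - a) + ENNReal.ofReal (1/2 - 2*ε) := by
        rw [w1_apply, unifOn_Ioo_of_right_le (by linarith), zero_add]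
        gcongr
        · simpa [hε.ne'] using unifOn_Ioo_le (a := 2/3) (b := 2/3 + 3*ε) (m := 3*ε) a b
        · exact unifOn_le (by linarith) (by linarith) _
    _ < ENNReal.ofReal ε + ENNReal.ofReal (1/2 - 2*ε) := by
        gcongr
        · exact ENNReal.ofReal_ne_top
        · exact (ENNReal.ofReal_lt_ofReal_iff hε).2 (by linarith)
    _ = ENNReal.ofReal (1/2 - ε) := by
        rw [← ENNReal.ofReal_add hε.le (by linarith)]; ring_nf

end PlayerOne

theorem w1_Ioo_lt_or_w1_Ioo_lt {ε a₀ b₀ a₁ b₁ a₂ b₂ : ℝ} (hε : 0 < ε) (hε' : ε < 1/20)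
    (ha₁ : 0 ≤ a₁) (hb₁ : b₁ ≤ 1) (ha₂ : 0 ≤ a₂) (hb₂ : b₂ ≤ 1)
    (hlen₁ : 1/3 + ε < b₁ - a₁) (hlen₂ : 1/3 + ε < b₂ - a₂)
    (h₀₁ : b₀ ≤ a₁ ∨ b₁ ≤ a₀) (h₀₂ : b₀ ≤ a₂ ∨ b₂ ≤ a₀) (h₁₂ : b₁ ≤ a₂ ∨ b₂ ≤ a₁)
    (hzero : a₀ ≤ 0 ∨ a₁ ≤ 0 ∨ a₂ ≤ 0) (hone : 1 ≤ b₀ ∨ 1 ≤ b₁ ∨ 1 ≤ b₂) :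
    w1 ε (Ioo a₀ b₀) < w1 ε (Ioo a₁ b₁) ∨ w1 ε (Ioo a₀ b₀) < w1 ε (Ioo a₂ b₂) := by
  wlog h₁₂' : b₁ ≤ a₂ generalizing a₁ b₁ a₂ b₂
  · exact (this ha₂ hb₂ ha₁ hb₁ hlen₂ hlen₁ h₀₂ h₀₁ h₁₂.symm (by tauto) (by tauto)
      (h₁₂.resolve_left h₁₂')).symm
  rcases h₀₂ with h | h
  · have hb₂ : 1 ≤ b₂ := by rcases hone with h' | h' | h' <;> linarith
    right
    calc w1 ε (Ioo a₀ b₀) ≤ ENNReal.ofReal (1/2 - ε) :=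
          w1_Ioo_le_of_le_two_thirds hε hε' (by linarith)
      _ < ENNReal.ofReal (1/2 + ε) :=
          (ENNReal.ofReal_lt_ofReal_iff (by linarith)).2 (by linarith)
      _ ≤ w1 ε (Ioo a₂ b₂) := ofReal_le_w1_Ioo_of_one_le hε hε' (by linarith) hb₂
  · have ha₁ : a₁ ≤ 0 := by rcases hzero with h' | h' | h' <;> linarith
    left
    exact (w1_Ioo_lt_of_lt hε hε' (by linarith)).trans_le
      (ofReal_le_w1_Ioo_of_le_zero hε hε' ha₁ (by linarith))

theorem egal_vEg3_le_of_complete_of_envyFree {ε : ℝ} (hε : 0 < ε) (hε' : ε < 1/20)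
    (d : ConnDiv 3) (hc : d.Complete) (hef : EnvyFree (vEg3 ε) d) :
    egal (vEg3 ε) d ≤ ENNReal.ofReal (1/3 + ε) := by
  by_contra! hlt
  have hv (i) : ENNReal.ofReal (1/3 + ε) < vEg3 ε i (d.pieces i) := hlt.trans_le (iInf_le _ i)
  choose a b hab using d.isInterval
  have hne (i) : a i < b i :=
    nonempty_Ioo.1 (hab i ▸ nonempty_of_measure_ne_zero (pos_of_gt (hv i)).ne')
  have hbd (i) := d.nonneg_and_le_one hab (hne i)
  have hlen (i) (hi : vEg3 ε i = wU) : 1/3 + ε < b i - a i := by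
    have := (hv i).trans_le (hi ▸ hab i ▸ wU_Ioo_le (a i) (b i))
    exact (ENNReal.ofReal_lt_ofReal_iff'.1 this).1
  have hord (i j) (hij : i ≠ j) := d.le_or_le hab (hne i) (hne j) hij
  have hcover (x : ℝ) (hx : x ∈ Icc 0 1) :
      (a 0 ≤ x ∧ x ≤ b 0) ∨ (a 1 ≤ x ∧ x ≤ b 1) ∨ (a 2 ≤ x ∧ x ≤ b 2) := by
    simpa [Fin.exists_fin_succ] using hc.exists_mem_Icc hab hx
  have hzero : a 0 ≤ 0 ∨ a 1 ≤ 0 ∨ a 2 ≤ 0 := by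
    have := hcover 0 (left_mem_Icc.2 zero_le_one); tauto
  have hone : 1 ≤ b 0 ∨ 1 ≤ b 1 ∨ 1 ≤ b 2 := by
    have := hcover 1 (right_mem_Icc.2 zero_le_one); tauto
  have henvy (j) : w1 ε (Ioo (a j) (b j)) ≤ w1 ε (Ioo (a 0) (b 0)) := hab 0 ▸ hab j ▸ hef 0 j
  rcases w1_Ioo_lt_or_w1_Ioo_lt hε hε' (hbd 1).1 (hbd 1).2 (hbd 2).1 (hbd 2).2 (hlen 1 rfl)
    (hlen 2 rfl) (hord 0 1 (by decide)) (hord 0 2 (by decide)) (hord 1 2 (by decide))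
    hzero hone with h | h
  exacts [(henvy 1).not_gt h, (henvy 2).not_gt h]

theorem exists_envyFree_egal_vEg3_eq {ε : ℝ} (hε : 0 < ε) (hε' : ε < 1/20) :
    ∃ y : ConnDiv 3,
      y.pieces 0 = Ioo 0 ε ∧
      y.pieces 1 = Ioo ε (1/2) ∧
      y.pieces 2 = Ioo (1/2) (1-ε) ∧
      EnvyFree (vEg3 ε) y ∧ ¬ y.Complete ∧
      egal (vEg3 ε) y = ENNReal.ofReal (1/2 - ε) := by
  let y := ConnDiv.ofIoo ![0, ε, 1/2] ![ε, 1/2, 1-ε]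
    (fun i => by fin_cases i <;> simp [hε.le])
    (fun i => by fin_cases i <;> simp <;> linarith)
    (fun i j hij => by fin_cases i <;> fin_cases j <;> simp_all; linarith)
  have hown (i) : vEg3 ε i (y.pieces i) = ENNReal.ofReal (1/2 - ε) := by
    fin_cases i
    · show w1 ε (Ioo 0 ε) = _
      exact le_antisymm (w1_Ioo_le_of_le_two_thirds hε hε' (by linarith))
        (ofReal_le_w1_Ioo_of_le_zero hε hε' le_rfl le_rfl)
    · exact wU_Ioo hε.le (by norm_num)
    · show wU (Ioo (1/2) (1-ε)) = _
      rw [wU_Ioo (by norm_num) (by linarith)]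
      ring_nf
  have hle (i j) : vEg3 ε i (y.pieces j) ≤ ENNReal.ofReal (1/2 - ε) := by
    fin_cases i
    · fin_cases j
      · exact w1_Ioo_le_of_le_two_thirds (a := 0) (b := ε) hε hε' (by linarith)
      · exact w1_Ioo_le_of_le_two_thirds (a := ε) (b := 1/2) hε hε' (by norm_num)
      · exact (w1_Ioo_le_of_subset (a := 1/2) (b := 1-ε) hε (by linarith) le_rfl).trans
          (ENNReal.ofReal_le_ofReal (by linarith))
    all_goals
      refine (wU_Ioo_le _ _).trans (ENNReal.ofReal_le_ofReal ?_)
      fin_cases j <;> simp <;> linarith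
  refine ⟨y, rfl, rfl, rfl, fun i j => (hle i j).trans (hown i).ge, ?_, ?_⟩
  · exact ConnDiv.not_complete_of_lt_one (d := y) (fun _ => rfl)
      fun i => by fin_cases i <;> simp <;> linarith
  · simp only [egal, hown, iInf_const]

/-- For 3 players, every envy-free complete connected division has egalitarian
welfare at most `1/3 + ε`, while some envy-free partial connected division has
egalitarian welfare `1/2 - ε`; hence the 3-player egalitarian dumping paradox
gets arbitrarily close to `3/2`. -/
theorem egalitarian_dumping_three_players (ε : ℝ) (hε : 0 < ε) (hε' : ε < 1/20) :
    (∀ d : ConnDiv 3, d.Complete → EnvyFree (vEg3 ε) d →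
      egal (vEg3 ε) d ≤ ENNReal.ofReal (1/3 + ε)) ∧
    (∃ y : ConnDiv 3,
      y.pieces 0 = Set.Ioo 0 ε ∧
      y.pieces 1 = Set.Ioo ε (1/2) ∧
      y.pieces 2 = Set.Ioo (1/2) (1-ε) ∧
      EnvyFree (vEg3 ε) y ∧ ¬ y.Complete ∧
      egal (vEg3 ε) y = ENNReal.ofReal (1/2 - ε)) :=
  ⟨egal_vEg3_le_of_complete_of_envyFree hε hε', exists_envyFree_egal_vEg3_eq hε hε'⟩
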